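/- arXiv:1403.4680 — 5 statements merged into one kernel-verified Lean document; each statement's English description precedes it below -/
import Mathlib

section
/- If v₁, …, vₙ is an orthonormal basis of eigenvectors of Lᵀ H L with Lᵀ H L vᵢ = λᵢ vᵢ, and uᵢ = L vᵢ, then (H + Γ_pr⁻¹)⁻¹ = Γ_pr − Σ_{i=1}^n (λᵢ/(1+λᵢ)) uᵢ uᵢᵀ; i.e. the exact posterior covariance is the prior covariance minus a weighted sum of outer products of the directions uᵢ with weights λᵢ/(1+λᵢ). -/
/-!
With `Γ_pr = L Lᵀ` one has `H + Γ_pr⁻¹ = L⁻ᵀ (LᵀHL + 1) L⁻¹`, so the posterior covariance is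
`L (LᵀHL + 1)⁻¹ Lᵀ`. The orthonormal eigenbasis `vᵢ` diagonalises `LᵀHL + 1` with eigenvalues
`1 + λᵢ > 0` (as `LᵀHL` is positive semidefinite), so `(LᵀHL + 1)⁻¹ = Σ (1 + λᵢ)⁻¹ vᵢ vᵢᵀ`.
Conjugating by `L`, and writing `Γ_pr = L (Σ vᵢ vᵢᵀ) Lᵀ = Σ uᵢ uᵢᵀ`, the claim reduces to
`(1 + λᵢ)⁻¹ = 1 - λᵢ / (1 + λᵢ)`.
-/

open Matrix

namespace Matrix

variable {ι R : Type*} [Fintype ι]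

theorem sum_vecMulVec_self_eq_one_of_orthonormal [DecidableEq ι] [CommRing R] {v : ι → ι → R}
    (hv : ∀ i j, v i ⬝ᵥ v j = if i = j then 1 else 0) :
    ∑ i, vecMulVec (v i) (v i) = 1 := by
  set V : Matrix ι ι R := of fun k i => v i k
  have hVtV : Vᵀ * V = 1 := by
    ext i j
    simpa [mul_apply, dotProduct, one_apply, V] using hv i j
  calc ∑ i, vecMulVec (v i) (v i) = V * Vᵀ := by
        ext k l
        simp [mul_apply, vecMulVec_apply, sum_apply, V]
    _ = 1 := mul_eq_one_comm.mp hVtV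

theorem inv_eq_sum_inv_smul_vecMulVec_of_orthonormal [DecidableEq ι] [Field R] {A : Matrix ι ι R}
    {v : ι → ι → R} {μ : ι → R} (hv : ∀ i j, v i ⬝ᵥ v j = if i = j then 1 else 0)
    (hAv : ∀ i, A *ᵥ v i = μ i • v i) (hμ : ∀ i, μ i ≠ 0) :
    A⁻¹ = ∑ i, (μ i)⁻¹ • vecMulVec (v i) (v i) := by
  apply inv_eq_right_inv
  rw [Finset.mul_sum, ← sum_vecMulVec_self_eq_one_of_orthonormal hv]
  refine Finset.sum_congr rfl fun i _ => ?_
  rw [Matrix.mul_smul, mul_vecMulVec, hAv i, smul_vecMulVec, smul_smul, inv_mul_cancel₀ (hμ i),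
    one_smul]

theorem PosSemidef.nonneg_of_mulVec_eq_smul [CommRing R] [LinearOrder R] [IsStrictOrderedRing R]
    [StarRing R] [StarOrderedRing R] [TrivialStar R] {A : Matrix ι ι R} (hA : A.PosSemidef)
    {x : ι → R} {c : R} (hx : x ≠ 0) (h : A *ᵥ x = c • x) : 0 ≤ c := by
  have hxx : 0 < x ⬝ᵥ x := by simpa using dotProduct_self_star_pos_iff.mpr hx
  have hAx := hA.dotProduct_mulVec_nonneg x
  rw [star_trivial, h, dotProduct_smul, smul_eq_mul] at hAx
  exact nonneg_of_mul_nonneg_left hAx hxx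

theorem mul_vecMulVec_mul_transpose [CommSemiring R] (M N : Matrix ι ι R) (x y : ι → R) :
    M * vecMulVec x y * Nᵀ = vecMulVec (M *ᵥ x) (N *ᵥ y) := by
  rw [mul_vecMulVec, vecMulVec_mul, vecMul_transpose]

theorem inv_add_inv_mul_transpose [DecidableEq ι] [CommRing R] {L : Matrix ι ι R}
    (hL : IsUnit L.det) (H : Matrix ι ι R) :
    (H + (L * Lᵀ)⁻¹)⁻¹ = L * (Lᵀ * H * L + 1)⁻¹ * Lᵀ := by
  have hLT : IsUnit Lᵀ.det := by rwa [det_transpose]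
  have hconj : H + (L * Lᵀ)⁻¹ = Lᵀ⁻¹ * (Lᵀ * H * L + 1) * L⁻¹ := by
    simp only [mul_inv_rev, Matrix.mul_add, Matrix.add_mul, Matrix.mul_one, ← Matrix.mul_assoc,
      nonsing_inv_mul _ hLT, Matrix.one_mul, Matrix.mul_assoc H, mul_nonsing_inv _ hL,
      Matrix.mul_one]
  rw [hconj, mul_inv_rev, mul_inv_rev, nonsing_inv_nonsing_inv _ hL,
    nonsing_inv_nonsing_inv _ hLT, ← Matrix.mul_assoc]

end Matrix

theorem stmt_6_general {n : ℕ}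
    (Γpr L H : Matrix (Fin n) (Fin n) ℝ)
    (hL : IsUnit L.det) (hLL : Γpr = L * Lᵀ)
    (hH : H.PosSemidef)
    (v : Fin n → Fin n → ℝ) (lam : Fin n → ℝ)
    (hON : ∀ i j, v i ⬝ᵥ v j = if i = j then (1 : ℝ) else 0)
    (heig : ∀ i, (Lᵀ * H * L) *ᵥ v i = lam i • v i)
    (u : Fin n → Fin n → ℝ) (hu : ∀ i, u i = L *ᵥ v i) :
    (H + Γpr⁻¹)⁻¹ = Γpr - ∑ i : Fin n, (lam i / (1 + lam i)) • vecMulVec (u i) (u i) := by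
  have hlam : ∀ i, 0 ≤ lam i := fun i => by
    refine (hH.conjTranspose_mul_mul_same L).nonneg_of_mulVec_eq_smul (fun h0 => ?_) (heig i)
    simpa [h0] using hON i i
  have hshift : ∀ i, (Lᵀ * H * L + 1) *ᵥ v i = (1 + lam i) • v i := fun i => by
    rw [add_mulVec, heig i, one_mulVec, add_smul, one_smul, add_comm]
  have hconj : ∀ c : Fin n → ℝ,
      L * (∑ i, c i • vecMulVec (v i) (v i)) * Lᵀ = ∑ i, c i • vecMulVec (u i) (u i) := by
    intro c
    simp only [Finset.mul_sum, Finset.sum_mul, Matrix.mul_smul, Matrix.smul_mul,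
      mul_vecMulVec_mul_transpose, hu]
  have hΓ : L * Lᵀ = ∑ i, vecMulVec (u i) (u i) := by
    simpa [sum_vecMulVec_self_eq_one_of_orthonormal hON] using hconj 1
  have hpos : ∀ i, 1 + lam i ≠ 0 := fun i => by linarith [hlam i]
  rw [hLL, inv_add_inv_mul_transpose hL,
    inv_eq_sum_inv_smul_vecMulVec_of_orthonormal hON hshift hpos, hconj, hΓ,
    ← Finset.sum_sub_distrib]
  refine Finset.sum_congr rfl fun i _ => ?_
  have hweight : (1 + lam i)⁻¹ = 1 - lam i / (1 + lam i) := by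
    field_simp [hpos i]
    ring
  rw [hweight, sub_smul, one_smul]

/-- if `v₁,…,vₙ` is an orthonormal basis of eigenvectors of `LᵀHL`
with eigenvalues `λᵢ`, and `uᵢ = L vᵢ`, then
`(H + Γ_pr⁻¹)⁻¹ = Γ_pr − Σᵢ (λᵢ/(1+λᵢ)) uᵢ uᵢᵀ`. -/
theorem stmt_6 {n : ℕ} (hn : 1 ≤ n)
    (Γpr L H : Matrix (Fin n) (Fin n) ℝ)
    (hΓpr : Γpr.PosDef) (hL : IsUnit L.det) (hLL : Γpr = L * Lᵀ)
    (hH : H.PosSemidef)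
    (v : Fin n → Fin n → ℝ) (lam : Fin n → ℝ)
    (hON : ∀ i j, v i ⬝ᵥ v j = if i = j then (1 : ℝ) else 0)
    (heig : ∀ i, (Lᵀ * H * L) *ᵥ v i = lam i • v i)
    (u : Fin n → Fin n → ℝ) (hu : ∀ i, u i = L *ᵥ v i) :
    (H + Γpr⁻¹)⁻¹ = Γpr - ∑ i : Fin n, (lam i / (1 + lam i)) • vecMulVec (u i) (u i) :=
  stmt_6_general Γpr L H hL hLL hH v lam hON heig u hu
end

section
/- Let v₁, …, v_r be orthonormal vectors in ℝⁿ with Lᵀ H L vᵢ = λᵢ vᵢ, set uᵢ = L vᵢ, wᵢ = L⁻ᵀ vᵢ, Uᵣ = [u₁ … u_r], Wᵣ = [w₁ … w_r], and Pᵣ = Uᵣ Wᵣᵀ. Then Pᵣᵀ H Pᵣ + Γ_pr⁻¹ is positive definite and (Pᵣᵀ H Pᵣ + Γ_pr⁻¹)⁻¹ = Γ_pr − Σ_{i=1}^r (λᵢ/(1+λᵢ)) uᵢ uᵢᵀ; i.e. the covariance of the approximate posterior obtained by projecting the argument of the likelihood onto the likelihood-informed subspace is a rank-r negative semidefinite update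 of the prior covariance. -/
/-! Conjugating by `L` whitens the prior: `Γ_pr` becomes `1`, `Pᵣ` becomes the orthogonal
projector `V Vᵀ` onto the span of the `vᵢ` (the columns of `V`), and `Pᵣᵀ H Pᵣ` becomes
`V Λ Vᵀ` with `Λ = diag λ`. Hence `Pᵣᵀ H Pᵣ + Γ_pr⁻¹ = L⁻ᵀ (1 + V Λ Vᵀ) L⁻¹`, and because
`Vᵀ V = 1` the matrix `1 + V Λ Vᵀ` has inverse `1 - V diag (λᵢ / (1 + λᵢ)) Vᵀ`. This needs only
`1 + λᵢ ≠ 0`, which holds since the `λᵢ` are eigenvalues of the positive semidefinite `Lᵀ H L`. -/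

open Matrix

namespace Matrix

variable {m k R : Type*}

theorem transpose_of_mulVec [Fintype m] [NonUnitalCommSemiring R] (A : Matrix m m R)
    (v : k → m → R) : (of fun i => A *ᵥ v i)ᵀ = A * (of v)ᵀ := by
  ext i j
  simp [mul_apply, mulVec, dotProduct]

theorem mul_transpose_of_of_mulVec_eq_smul [Fintype m] [Fintype k] [DecidableEq k]
    [CommSemiring R] {A : Matrix m m R} {v : k → m → R} {μ : k → R} (h : ∀ i, A *ᵥ v i = μ i • v i) :
    A * (of v)ᵀ = (of v)ᵀ * diagonal μ := by
  rw [← transpose_of_mulVec]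
  ext i j
  simp [h, mul_comm]

theorem of_mul_transpose_of_eq_one [Fintype m] [CommSemiring R] [DecidableEq k]
    {v : k → m → R} (h : ∀ i j, v i ⬝ᵥ v j = if i = j then 1 else 0) :
    of v * (of v)ᵀ = 1 := by
  ext i j
  simp [mul_apply, dotProduct, one_apply, ← h]

theorem transpose_of_mul_diagonal_mul_of [Fintype k] [DecidableEq k] [CommSemiring R]
    (v : k → m → R) (c : k → R) :
    (of v)ᵀ * diagonal c * of v = ∑ i, c i • vecMulVec (v i) (v i) := by
  ext a b
  simp [mul_apply, diagonal_apply, Matrix.sum_apply, vecMulVec_apply, mul_assoc, mul_left_comm]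

theorem one_add_mul_mul_mul_one_sub_mul_mul [Fintype m] [Fintype k] [DecidableEq m]
    [DecidableEq k] [Ring R] {V : Matrix m k R} {X : Matrix k m R} {D C : Matrix k k R}
    (hXV : X * V = 1) (hDC : D - C - D * C = 0) :
    (1 + V * D * X) * (1 - V * C * X) = 1 := by
  have hcross : V * D * X * (V * C * X) = V * (D * C) * X := by
    simp only [Matrix.mul_assoc, ← Matrix.mul_assoc X, hXV, Matrix.one_mul]
  calc (1 + V * D * X) * (1 - V * C * X) = 1 + V * (D - C - D * C) * X := by
        simp only [Matrix.mul_sub, Matrix.sub_mul, Matrix.add_mul, Matrix.one_mul,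
          Matrix.mul_one, hcross]
        abel
    _ = 1 := by rw [hDC, Matrix.mul_zero, Matrix.zero_mul, add_zero]

theorem PosSemidef.nonneg_of_mulVec_eq_smul_s7 [Fintype m] {A : Matrix m m ℝ}
    (hA : A.PosSemidef) {x : m → ℝ} {μ : ℝ} (hx : x ≠ 0) (h : A *ᵥ x = μ • x) : 0 ≤ μ := by
  have hquad := hA.dotProduct_mulVec_nonneg x
  rw [h, dotProduct_smul, star_trivial, smul_eq_mul] at hquad
  exact nonneg_of_mul_nonneg_left hquad (dotProduct_self_star_pos_iff.mpr hx)

theorem projector_transpose_mul_mul_projector [Fintype m] [DecidableEq m] [Fintype k]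
    [DecidableEq k] [CommRing R]
    {L H : Matrix m m R} {V : Matrix m k R} {D : Matrix k k R} (hVV : Vᵀ * V = 1)
    (hEig : Lᵀ * H * L * V = V * D) :
    (L * V * Vᵀ * L⁻¹)ᵀ * H * (L * V * Vᵀ * L⁻¹) = L⁻¹ᵀ * (V * D * Vᵀ) * L⁻¹ := by
  calc (L * V * Vᵀ * L⁻¹)ᵀ * H * (L * V * Vᵀ * L⁻¹)
      = L⁻¹ᵀ * V * Vᵀ * (Lᵀ * H * L * V) * Vᵀ * L⁻¹ := by
        simp only [transpose_mul, transpose_transpose, Matrix.mul_assoc]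
    _ = L⁻¹ᵀ * (V * D * Vᵀ) * L⁻¹ := by
        rw [hEig]
        simp only [Matrix.mul_assoc, ← Matrix.mul_assoc Vᵀ V, hVV, Matrix.one_mul]

theorem projected_precision_mul_covariance_eq_one [Fintype m] [DecidableEq m] [Fintype k]
    [DecidableEq k] [Field R] {L H : Matrix m m R} {V : Matrix m k R} {μ : k → R}
    (hL : IsUnit L.det) (hVV : Vᵀ * V = 1) (hEig : Lᵀ * H * L * V = V * diagonal μ)
    (hμ : ∀ i, 1 + μ i ≠ 0) :
    ((L * V * Vᵀ * L⁻¹)ᵀ * H * (L * V * Vᵀ * L⁻¹) + (L * Lᵀ)⁻¹) *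
      (L * Lᵀ - L * V * diagonal (fun i => μ i / (1 + μ i)) * Vᵀ * Lᵀ) = 1 := by
  have hDC : diagonal μ - diagonal (fun i => μ i / (1 + μ i)) -
      diagonal μ * diagonal (fun i => μ i / (1 + μ i)) = 0 := by
    rw [diagonal_mul_diagonal, diagonal_sub, diagonal_sub, diagonal_eq_zero]
    funext i
    rw [Pi.zero_apply]
    field_simp [hμ i]
    ring
  have hwhitened := one_add_mul_mul_mul_one_sub_mul_mul hVV hDC
  rw [projector_transpose_mul_mul_projector hVV hEig, Matrix.mul_inv_rev,
    ← transpose_nonsing_inv]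
  calc _ = L⁻¹ᵀ * ((1 + V * diagonal μ * Vᵀ) * (L⁻¹ * L) *
        (1 - V * diagonal (fun i => μ i / (1 + μ i)) * Vᵀ)) * Lᵀ := by
        simp only [Matrix.mul_add, Matrix.add_mul, Matrix.mul_sub, Matrix.sub_mul,
          Matrix.mul_assoc, Matrix.one_mul, Matrix.mul_one]
        abel
    _ = 1 := by
      rw [nonsing_inv_mul _ hL, Matrix.mul_one, hwhitened, Matrix.mul_one, ← transpose_mul,
        mul_nonsing_inv _ hL, transpose_one]

end Matrix

theorem stmt_7_general {n r : ℕ}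
    (Γpr L H : Matrix (Fin n) (Fin n) ℝ)
    (hΓpr : Γpr.PosDef) (hL : IsUnit L.det) (hLL : Γpr = L * Lᵀ)
    (hH : H.PosSemidef)
    (v : Fin r → Fin n → ℝ) (lam : Fin r → ℝ)
    (hON : ∀ i j, v i ⬝ᵥ v j = if i = j then (1 : ℝ) else 0)
    (heig : ∀ i, (Lᵀ * H * L) *ᵥ v i = lam i • v i)
    (u w : Fin r → Fin n → ℝ)
    (hu : ∀ i, u i = L *ᵥ v i) (hw : ∀ i, w i = (Lᵀ)⁻¹ *ᵥ v i)
    (U W : Matrix (Fin n) (Fin r) ℝ)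
    (hU : ∀ i j, U i j = u j i) (hW : ∀ i j, W i j = w j i)
    (P : Matrix (Fin n) (Fin n) ℝ) (hP : P = U * Wᵀ) :
    (Pᵀ * H * P + Γpr⁻¹).PosDef ∧
      (Pᵀ * H * P + Γpr⁻¹)⁻¹ =
        Γpr - ∑ i : Fin r, (lam i / (1 + lam i)) • vecMulVec (u i) (u i) := by
  set V := (of v)ᵀ
  have hVV : Vᵀ * V = 1 := of_mul_transpose_of_eq_one hON
  have hEig : Lᵀ * H * L * V = V * diagonal lam := mul_transpose_of_of_mulVec_eq_smul heig
  have huV : (of u)ᵀ = L * V := by rw [← transpose_of_mulVec, ← funext hu]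
  have hwV : (of w)ᵀ = Lᵀ⁻¹ * V := by rw [← transpose_of_mulVec, ← funext hw]
  clear_value V
  have hPV : P = L * V * Vᵀ * L⁻¹ := by
    rw [hP, show U = (of u)ᵀ from ext hU, show W = (of w)ᵀ from ext hW, huV, hwV,
      transpose_mul, ← transpose_nonsing_inv, transpose_transpose, ← Matrix.mul_assoc]
  have hupdate : ∑ i, (lam i / (1 + lam i)) • vecMulVec (u i) (u i) =
      L * V * diagonal (fun i => lam i / (1 + lam i)) * Vᵀ * Lᵀ := by
    have huV' : of u = Vᵀ * Lᵀ := by rw [← transpose_transpose (of u), huV, transpose_mul]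
    rw [← transpose_of_mul_diagonal_mul_of, huV, huV', ← Matrix.mul_assoc]
  have hLHL : (Lᵀ * H * L).PosSemidef :=
    conjTranspose_eq_transpose_of_trivial L ▸ hH.conjTranspose_mul_mul_same L
  have hlam : ∀ i, 0 ≤ lam i := fun i =>
    hLHL.nonneg_of_mulVec_eq_smul_s7 (fun h => by simpa [h] using hON i i) (heig i)
  refine ⟨?_, inv_eq_right_inv ?_⟩
  · simpa [conjTranspose_eq_transpose_of_trivial] using
      PosDef.posSemidef_add (hH.conjTranspose_mul_mul_same P) hΓpr.inv
  · rw [hupdate, hPV, hLL]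
    exact projected_precision_mul_covariance_eq_one hL hVV hEig fun i => by linarith [hlam i]

/-- with `v₁,…,v_r` orthonormal eigenvectors of `LᵀHL`,
`uᵢ = L vᵢ`, `wᵢ = L⁻ᵀ vᵢ`, `Uᵣ = [u₁ … u_r]`, `Wᵣ = [w₁ … w_r]`, `Pᵣ = Uᵣ Wᵣᵀ`,
the matrix `Pᵣᵀ H Pᵣ + Γ_pr⁻¹` is positive definite and its inverse equals
`Γ_pr − Σᵢ (λᵢ/(1+λᵢ)) uᵢ uᵢᵀ`. -/
theorem stmt_7 {n r : ℕ} (hn : 1 ≤ n) (hr1 : 1 ≤ r) (hrn : r ≤ n)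
    (Γpr L H : Matrix (Fin n) (Fin n) ℝ)
    (hΓpr : Γpr.PosDef) (hL : IsUnit L.det) (hLL : Γpr = L * Lᵀ)
    (hH : H.PosSemidef)
    (v : Fin r → Fin n → ℝ) (lam : Fin r → ℝ)
    (hON : ∀ i j, v i ⬝ᵥ v j = if i = j then (1 : ℝ) else 0)
    (heig : ∀ i, (Lᵀ * H * L) *ᵥ v i = lam i • v i)
    (u w : Fin r → Fin n → ℝ)
    (hu : ∀ i, u i = L *ᵥ v i) (hw : ∀ i, w i = (Lᵀ)⁻¹ *ᵥ v i)
    (U W : Matrix (Fin n) (Fin r) ℝ)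
    (hU : ∀ i j, U i j = u j i) (hW : ∀ i j, W i j = w j i)
    (P : Matrix (Fin n) (Fin n) ℝ) (hP : P = U * Wᵀ) :
    (Pᵀ * H * P + Γpr⁻¹).PosDef ∧
      (Pᵀ * H * P + Γpr⁻¹)⁻¹ =
        Γpr - ∑ i : Fin r, (lam i / (1 + lam i)) • vecMulVec (u i) (u i) :=
  stmt_7_general Γpr L H hΓpr hL hLL hH v lam hON heig u w hu hw U W hU hW P hP
end

section
/- The decomposition x = Πᵣ x + (I − Πᵣ) x is orthogonal with respect to the inner product induced by the prior precision matrix: for all x, y ∈ ℝⁿ, (Πᵣ x)ᵀ Γ_pr⁻¹ ((I − Πᵣ) y) = 0. -/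
open Matrix

/-
`Πᵣ = L (Ψᵣ Ψᵣᵀ) L⁻¹` is the conjugate by `L` of the orthogonal projector `Ψᵣ Ψᵣᵀ`,
hence idempotent, and it is self-adjoint for `Γ_pr⁻¹ = L⁻ᵀ L⁻¹`:
`Πᵣᵀ Γ_pr⁻¹ = Γ_pr⁻¹ Πᵣ`.
A `G`-self-adjoint idempotent makes `Πᵣ x` and `(I − Πᵣ) y` `G`-orthogonal, since
`Πᵣᵀ G (I − Πᵣ) = G (Πᵣ − Πᵣ²) = 0`.
-/

namespace Matrix

variable {m k l R : Type*} [CommRing R]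

theorem transpose_mul_self_eq_one_of_fromCols [Fintype m] [DecidableEq k] [DecidableEq l]
    {A : Matrix m k R} {B : Matrix m l R} (h : (fromCols A B)ᵀ * fromCols A B = 1) :
    Aᵀ * A = 1 := by
  rw [transpose_fromCols, fromRows_mul_fromCols, ← fromBlocks_one] at h
  exact (fromBlocks_inj.mp h).1

theorem isIdempotentElem_mul_transpose_self [Fintype m] [Fintype k] [DecidableEq k]
    {A : Matrix m k R} (h : Aᵀ * A = 1) : IsIdempotentElem (A * Aᵀ) := by
  rw [IsIdempotentElem, Matrix.mul_assoc, ← Matrix.mul_assoc Aᵀ, h, Matrix.one_mul]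

theorem isSymm_mul_transpose_self' [Fintype k] (A : Matrix m k R) : (A * Aᵀ).IsSymm := by
  rw [IsSymm, transpose_mul, transpose_transpose]

theorem IsIdempotentElem.mul_mul_nonsing_inv [Fintype m] [DecidableEq m] {P L : Matrix m m R}
    (hP : IsIdempotentElem P) (hL : IsUnit L.det) : IsIdempotentElem (L * P * L⁻¹) := by
  rw [IsIdempotentElem]
  calc L * P * L⁻¹ * (L * P * L⁻¹) = L * P * (L⁻¹ * L) * P * L⁻¹ := by
        simp only [Matrix.mul_assoc]
    _ = L * P * L⁻¹ := by
        rw [nonsing_inv_mul _ hL, Matrix.mul_one, Matrix.mul_assoc L P P, hP.eq]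

theorem IsSymm.transpose_conj_mul_inv_mul_transpose [Fintype m] [DecidableEq m]
    {P L : Matrix m m R} (hP : P.IsSymm) (hL : IsUnit L.det) :
    (L * P * L⁻¹)ᵀ * (L * Lᵀ)⁻¹ = (L * Lᵀ)⁻¹ * (L * P * L⁻¹) := by
  have hLt : IsUnit Lᵀ.det := by rwa [det_transpose]
  rw [Matrix.mul_inv_rev, transpose_mul, transpose_mul, hP.eq, transpose_nonsing_inv]
  calc (Lᵀ)⁻¹ * (P * Lᵀ) * ((Lᵀ)⁻¹ * L⁻¹)
        = (Lᵀ)⁻¹ * P * (Lᵀ * (Lᵀ)⁻¹) * L⁻¹ := by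
        simp only [Matrix.mul_assoc]
    _ = (Lᵀ)⁻¹ * (L⁻¹ * L) * P * L⁻¹ := by
        rw [mul_nonsing_inv _ hLt, nonsing_inv_mul _ hL, Matrix.mul_one, Matrix.mul_one]
    _ = (Lᵀ)⁻¹ * L⁻¹ * (L * P * L⁻¹) := by
        simp only [Matrix.mul_assoc]

theorem mul_mul_transpose_inv_transpose_mul [Fintype m] [DecidableEq m] [Fintype k]
    (L : Matrix m m R) (Ψ : Matrix m k R) :
    (L * Ψ) * ((Lᵀ)⁻¹ * Ψ)ᵀ = L * (Ψ * Ψᵀ) * L⁻¹ := by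
  rw [transpose_mul, transpose_nonsing_inv, transpose_transpose]
  simp only [Matrix.mul_assoc]

theorem dotProduct_mulVec_one_sub_mulVec_eq_zero [Fintype m] [DecidableEq m] {G P : Matrix m m R}
    (hP : IsIdempotentElem P) (hG : Pᵀ * G = G * P) (x y : m → R) :
    (P *ᵥ x) ⬝ᵥ (G *ᵥ ((1 - P) *ᵥ y)) = 0 := by
  have hzero : Pᵀ * (G * (1 - P)) = 0 := by
    rw [← Matrix.mul_assoc, hG, Matrix.mul_assoc, Matrix.mul_sub, Matrix.mul_one, hP.eq,
      sub_self, Matrix.mul_zero]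
  rw [mulVec_mulVec, ← vecMul_transpose, dotProduct_mulVec, vecMul_vecMul, hzero,
    vecMul_zero, zero_dotProduct]

end Matrix

theorem stmt_10_general {n r : ℕ}
    (Γpr L : Matrix (Fin n) (Fin n) ℝ)
    (hL : IsUnit L.det) (hLL : Γpr = L * Lᵀ)
    (Ψr : Matrix (Fin n) (Fin r) ℝ) (Ψp : Matrix (Fin n) (Fin (n - r)) ℝ)
    (hQ1 : (fromCols Ψr Ψp)ᵀ * fromCols Ψr Ψp = 1)
    (Φr : Matrix (Fin n) (Fin r) ℝ) (hΦr : Φr = L * Ψr)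
    (Ξr : Matrix (Fin n) (Fin r) ℝ) (hΞr : Ξr = (Lᵀ)⁻¹ * Ψr)
    (Pir : Matrix (Fin n) (Fin n) ℝ) (hPir : Pir = Φr * Ξrᵀ) :
    ∀ x y : Fin n → ℝ, (Pir *ᵥ x) ⬝ᵥ (Γpr⁻¹ *ᵥ ((1 - Pir) *ᵥ y)) = 0 := by
  have hΨr : Ψrᵀ * Ψr = 1 := transpose_mul_self_eq_one_of_fromCols hQ1
  have hPir_conj : Pir = L * (Ψr * Ψrᵀ) * L⁻¹ := by
    rw [hPir, hΦr, hΞr, mul_mul_transpose_inv_transpose_mul]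
  subst hLL hPir_conj
  exact dotProduct_mulVec_one_sub_mulVec_eq_zero
    ((isIdempotentElem_mul_transpose_self hΨr).mul_mul_nonsing_inv hL)
    ((isSymm_mul_transpose_self' Ψr).transpose_conj_mul_inv_mul_transpose hL)

/-- the decomposition `x = Πᵣ x + (I − Πᵣ) x` is orthogonal with
respect to the inner product induced by the prior precision matrix:
`(Πᵣ x)ᵀ Γ_pr⁻¹ ((I − Πᵣ) y) = 0` for all `x, y`. -/
theorem stmt_10 {n r : ℕ} (hn : 1 ≤ n) (hr1 : 1 ≤ r) (hrn : r ≤ n)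
    (Γpr L : Matrix (Fin n) (Fin n) ℝ)
    (hΓpr : Γpr.PosDef) (hL : IsUnit L.det) (hLL : Γpr = L * Lᵀ)
    (Ψr : Matrix (Fin n) (Fin r) ℝ) (Ψp : Matrix (Fin n) (Fin (n - r)) ℝ)
    (hQ1 : (fromCols Ψr Ψp)ᵀ * fromCols Ψr Ψp = 1)
    (hQ2 : fromCols Ψr Ψp * (fromCols Ψr Ψp)ᵀ = 1)
    (Φr : Matrix (Fin n) (Fin r) ℝ) (hΦr : Φr = L * Ψr)
    (Φp : Matrix (Fin n) (Fin (n - r)) ℝ) (hΦp : Φp = L * Ψp)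
    (Ξr : Matrix (Fin n) (Fin r) ℝ) (hΞr : Ξr = (Lᵀ)⁻¹ * Ψr)
    (Ξp : Matrix (Fin n) (Fin (n - r)) ℝ) (hΞp : Ξp = (Lᵀ)⁻¹ * Ψp)
    (Pir : Matrix (Fin n) (Fin n) ℝ) (hPir : Pir = Φr * Ξrᵀ) :
    ∀ x y : Fin n → ℝ, (Pir *ᵥ x) ⬝ᵥ (Γpr⁻¹ *ᵥ ((1 - Pir) *ᵥ y)) = 0 :=
  stmt_10_general Γpr L hL hLL Ψr Ψp hQ1 Φr hΦr Ξr hΞr Pir hPir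
end

section
/- The prior covariance decomposes as Γ_pr = Φᵣ Φᵣᵀ + Φ⊥ Φ⊥ᵀ, the complement projection of the prior covariance satisfies (I − Πᵣ) Γ_pr (I − Πᵣ)ᵀ = Φ⊥ Φ⊥ᵀ = Γ_pr − Φᵣ Φᵣᵀ, and consequently for every real r×r matrix Γ̃ one has Φᵣ Γ̃ Φᵣᵀ + (I − Πᵣ) Γ_pr (I − Πᵣ)ᵀ = Γ_pr + Φᵣ (Γ̃ − I_r) Φᵣᵀ; this is the reduced-variance estimator of the posterior covariance. -/
/-!
Writing `Γ_pr = L Lᵀ` and `[Ψᵣ Ψ⊥] [Ψᵣ Ψ⊥]ᵀ = Ψᵣ Ψᵣᵀ + Ψ⊥ Ψ⊥ᵀ = I` gives the splitting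
`Γ_pr = L (Ψᵣ Ψᵣᵀ + Ψ⊥ Ψ⊥ᵀ) Lᵀ = Φᵣ Φᵣᵀ + Φ⊥ Φ⊥ᵀ`. Since `Πᵣ = L Ψᵣ Ψᵣᵀ L⁻¹`, the complement
projector intertwines with `L` as `(I − Πᵣ) L = L Ψ⊥ Ψ⊥ᵀ`, and `Ψ⊥ Ψ⊥ᵀ` is a symmetric idempotent
because `Ψ⊥ᵀ Ψ⊥ = I`; hence `(I − Πᵣ) Γ_pr (I − Πᵣ)ᵀ = L Ψ⊥ Ψ⊥ᵀ Lᵀ = Φ⊥ Φ⊥ᵀ`. The last identity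
is then a rearrangement.
-/

open Matrix

namespace Matrix

variable {R l m ι κ : Type*} [CommRing R]

theorem mul_transpose_add_mul_transpose_of_fromCols_mul_transpose_eq_one
    [Fintype ι] [Fintype κ] [DecidableEq m] {A : Matrix m ι R} {B : Matrix m κ R}
    (h : fromCols A B * (fromCols A B)ᵀ = 1) : A * Aᵀ + B * Bᵀ = 1 := by
  rwa [transpose_fromCols, fromCols_mul_fromRows] at h

theorem transpose_mul_self_eq_one_of_transpose_fromCols_mul_eq_one
    [Fintype m] [DecidableEq ι] [DecidableEq κ] {A : Matrix m ι R} {B : Matrix m κ R}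
    (h : (fromCols A B)ᵀ * fromCols A B = 1) : Bᵀ * B = 1 := by
  rw [transpose_fromCols, fromRows_mul_fromCols, ← fromBlocks_one] at h
  exact congrArg toBlocks₂₂ h

theorem mul_mul_transpose_eq_add_of_mul_transpose_add_eq_one
    [Fintype m] [Fintype ι] [Fintype κ] [DecidableEq m]
    {A : Matrix m ι R} {B : Matrix m κ R} (h : A * Aᵀ + B * Bᵀ = 1) (L : Matrix l m R) :
    L * Lᵀ = L * A * (L * A)ᵀ + L * B * (L * B)ᵀ := by
  calc L * Lᵀ = L * (A * Aᵀ + B * Bᵀ) * Lᵀ := by rw [h, Matrix.mul_one]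
    _ = L * A * (L * A)ᵀ + L * B * (L * B)ᵀ := by
      simp only [Matrix.mul_add, Matrix.add_mul, transpose_mul, Matrix.mul_assoc]

theorem one_sub_mul_mul_transpose_nonsing_inv_mul_mul
    [Fintype m] [Fintype ι] [Fintype κ] [DecidableEq m]
    {A : Matrix m ι R} {B : Matrix m κ R} (h : A * Aᵀ + B * Bᵀ = 1)
    {L : Matrix m m R} (hL : IsUnit L.det) :
    (1 - L * A * ((Lᵀ)⁻¹ * A)ᵀ) * L = L * (B * Bᵀ) := by
  have hA : L * A * ((Lᵀ)⁻¹ * A)ᵀ * L = L * (A * Aᵀ) := by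
    rw [transpose_mul, transpose_nonsing_inv, transpose_transpose]
    simp only [Matrix.mul_assoc, nonsing_inv_mul L hL, Matrix.mul_one]
  rw [Matrix.sub_mul, Matrix.one_mul, hA, eq_sub_of_add_eq' h, Matrix.mul_sub, Matrix.mul_one]

theorem mul_mul_transpose_mul_transpose_of_mul_eq
    [Fintype l] [Fintype m] [Fintype κ] [DecidableEq κ]
    {P : Matrix l l R} {L : Matrix l m R} {B : Matrix m κ R}
    (hP : P * L = L * (B * Bᵀ)) (hB : Bᵀ * B = 1) :
    P * (L * Lᵀ) * Pᵀ = L * B * (L * B)ᵀ := by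
  calc P * (L * Lᵀ) * Pᵀ = P * L * (P * L)ᵀ := by
        simp only [transpose_mul, Matrix.mul_assoc]
    _ = L * B * (Bᵀ * B) * (L * B)ᵀ := by
        rw [hP]; simp only [transpose_mul, transpose_transpose, Matrix.mul_assoc]
    _ = L * B * (L * B)ᵀ := by rw [hB, Matrix.mul_one]

end Matrix

theorem stmt_18_general {n r : ℕ}
    (Γpr L : Matrix (Fin n) (Fin n) ℝ)
    (hL : IsUnit L.det) (hLL : Γpr = L * Lᵀ)
    (Ψr : Matrix (Fin n) (Fin r) ℝ) (Ψp : Matrix (Fin n) (Fin (n - r)) ℝ)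
    (hQ1 : (fromCols Ψr Ψp)ᵀ * fromCols Ψr Ψp = 1)
    (hQ2 : fromCols Ψr Ψp * (fromCols Ψr Ψp)ᵀ = 1)
    (Φr : Matrix (Fin n) (Fin r) ℝ) (hΦr : Φr = L * Ψr)
    (Φp : Matrix (Fin n) (Fin (n - r)) ℝ) (hΦp : Φp = L * Ψp)
    (Ξr : Matrix (Fin n) (Fin r) ℝ) (hΞr : Ξr = (Lᵀ)⁻¹ * Ψr)
    (Pir : Matrix (Fin n) (Fin n) ℝ) (hPir : Pir = Φr * Ξrᵀ) :
    Γpr = Φr * Φrᵀ + Φp * Φpᵀ ∧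
    (1 - Pir) * Γpr * (1 - Pir)ᵀ = Φp * Φpᵀ ∧
    (1 - Pir) * Γpr * (1 - Pir)ᵀ = Γpr - Φr * Φrᵀ ∧
    ∀ Γt : Matrix (Fin r) (Fin r) ℝ,
      Φr * Γt * Φrᵀ + (1 - Pir) * Γpr * (1 - Pir)ᵀ = Γpr + Φr * (Γt - 1) * Φrᵀ := by
  have hsplit := mul_transpose_add_mul_transpose_of_fromCols_mul_transpose_eq_one hQ2
  have hdecomp : Γpr = Φr * Φrᵀ + Φp * Φpᵀ := by
    rw [hLL, hΦr, hΦp]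
    exact mul_mul_transpose_eq_add_of_mul_transpose_add_eq_one hsplit L
  have hcompl : (1 - Pir) * Γpr * (1 - Pir)ᵀ = Φp * Φpᵀ := by
    rw [hLL, hΦp]
    refine mul_mul_transpose_mul_transpose_of_mul_eq ?_
      (transpose_mul_self_eq_one_of_transpose_fromCols_mul_eq_one hQ1)
    rw [hPir, hΦr, hΞr]
    exact one_sub_mul_mul_transpose_nonsing_inv_mul_mul hsplit hL
  have hcompl' : (1 - Pir) * Γpr * (1 - Pir)ᵀ = Γpr - Φr * Φrᵀ := by
    rw [hcompl, hdecomp, add_sub_cancel_left]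
  refine ⟨hdecomp, hcompl, hcompl', fun Γt => ?_⟩
  rw [hcompl', Matrix.mul_sub, Matrix.sub_mul, Matrix.mul_one]
  abel

/-- `Γ_pr = Φᵣ Φᵣᵀ + Φ⊥ Φ⊥ᵀ`,
`(I − Πᵣ) Γ_pr (I − Πᵣ)ᵀ = Φ⊥ Φ⊥ᵀ = Γ_pr − Φᵣ Φᵣᵀ`, and for every `r×r` matrix
`Γ̃`, `Φᵣ Γ̃ Φᵣᵀ + (I − Πᵣ) Γ_pr (I − Πᵣ)ᵀ = Γ_pr + Φᵣ (Γ̃ − I_r) Φᵣᵀ` (the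
reduced-variance estimator of the posterior covariance). -/
theorem stmt_18 {n r : ℕ} (hn : 1 ≤ n) (hr1 : 1 ≤ r) (hrn : r ≤ n)
    (Γpr L : Matrix (Fin n) (Fin n) ℝ)
    (hΓpr : Γpr.PosDef) (hL : IsUnit L.det) (hLL : Γpr = L * Lᵀ)
    (Ψr : Matrix (Fin n) (Fin r) ℝ) (Ψp : Matrix (Fin n) (Fin (n - r)) ℝ)
    (hQ1 : (fromCols Ψr Ψp)ᵀ * fromCols Ψr Ψp = 1)
    (hQ2 : fromCols Ψr Ψp * (fromCols Ψr Ψp)ᵀ = 1)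
    (Φr : Matrix (Fin n) (Fin r) ℝ) (hΦr : Φr = L * Ψr)
    (Φp : Matrix (Fin n) (Fin (n - r)) ℝ) (hΦp : Φp = L * Ψp)
    (Ξr : Matrix (Fin n) (Fin r) ℝ) (hΞr : Ξr = (Lᵀ)⁻¹ * Ψr)
    (Ξp : Matrix (Fin n) (Fin (n - r)) ℝ) (hΞp : Ξp = (Lᵀ)⁻¹ * Ψp)
    (Pir : Matrix (Fin n) (Fin n) ℝ) (hPir : Pir = Φr * Ξrᵀ) :
    Γpr = Φr * Φrᵀ + Φp * Φpᵀ ∧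
    (1 - Pir) * Γpr * (1 - Pir)ᵀ = Φp * Φpᵀ ∧
    (1 - Pir) * Γpr * (1 - Pir)ᵀ = Γpr - Φr * Φrᵀ ∧
    ∀ Γt : Matrix (Fin r) (Fin r) ℝ,
      Φr * Γt * Φrᵀ + (1 - Pir) * Γpr * (1 - Pir)ᵀ = Γpr + Φr * (Γt - 1) * Φrᵀ :=
  stmt_18_general Γpr L hL hLL Ψr Ψp hQ1 hQ2 Φr hΦr Φp hΦp Ξr hΞr Pir hPir
end

section
/- Let Ψ be an n×r real matrix and Ψ' an n×r' real matrix, each with orthonormal columns (ΨᵀΨ = I_r, Ψ'ᵀΨ' = I_{r'}). Let a₁, …, a_r ≥ 0 with Σᵢ aᵢ = 1 and b₁, …, b_{r'} ≥ 0 with Σⱼ bⱼ = 1, and set D = diag(a₁^{1/4}, …, a_r^{1/4}) and D' = diag(b₁^{1/4}, …, b_{r'}^{1/4}). Then ‖(Ψ D)ᵀ (Ψ' D')‖_F² ≤ 1, where ‖·‖_F is the Frobenius norm; consequently the weighted subspace distance D(Y, Y') = sqrt(1 − ‖(Ψ D)ᵀ(Ψ' D')‖_F²) is well defined and lies in [0,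 1]. -/
open Matrix

/-- The squared Frobenius norm of a real matrix. -/
def frobSq {m k : ℕ} (M : Matrix (Fin m) (Fin k) ℝ) : ℝ :=
  ∑ i, ∑ j, (M i j) ^ 2

lemma col_norm_bound {n m : ℕ} (B : Matrix (Fin n) (Fin m) ℝ) (hB : Bᵀ * B = 1)
    (v : Fin n → ℝ) (hv : ∑ k, v k ^ 2 = 1) :
    ∑ j, (Bᵀ *ᵥ v) j ^ 2 ≤ 1 := by
  have hvB : v ᵥ* B = Bᵀ *ᵥ v := (Matrix.mulVec_transpose B v).symm
  generalize hcgen : Bᵀ *ᵥ v = c at hvB ⊢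
  have key : v ⬝ᵥ (B *ᵥ c) = c ⬝ᵥ c := by
    rw [Matrix.dotProduct_mulVec, hvB]
  have h3 : (B *ᵥ c) ⬝ᵥ (B *ᵥ c) = c ⬝ᵥ c := by
    rw [Matrix.dotProduct_mulVec, ← Matrix.mulVec_transpose, Matrix.mulVec_mulVec, hB,
      Matrix.one_mulVec]
  have cs := Finset.sum_mul_sq_le_sq_mul_sq Finset.univ v (B *ᵥ c)
  simp only [dotProduct] at key h3
  have hS0 : (0:ℝ) ≤ ∑ j, c j ^ 2 := Finset.sum_nonneg fun j _ => sq_nonneg _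
  have e1 : ∑ k, v k * (B *ᵥ c) k = ∑ j, c j ^ 2 := by rw [key]; simp [sq]
  have e2 : ∑ k, (B *ᵥ c) k ^ 2 = ∑ j, c j ^ 2 := by simpa [sq] using h3
  rw [e1, hv, e2, one_mul] at cs
  nlinarith

lemma row_bound {n r r' : ℕ} (Ψ : Matrix (Fin n) (Fin r) ℝ) (Ψ' : Matrix (Fin n) (Fin r') ℝ)
    (hΨ : Ψᵀ * Ψ = 1) (hΨ' : Ψ'ᵀ * Ψ' = 1) (i : Fin r) :
    ∑ j, ((Ψᵀ * Ψ') i j) ^ 2 ≤ 1 := by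
  have hv : ∑ k, (Ψ k i) ^ 2 = 1 := by
    have := congrFun (congrFun hΨ i) i
    simp [Matrix.mul_apply, Matrix.one_apply] at this
    simpa [sq] using this
  have := col_norm_bound Ψ' hΨ' (fun k => Ψ k i) hv
  refine le_trans (le_of_eq ?_) this
  refine Finset.sum_congr rfl fun j _ => ?_
  simp [Matrix.mul_apply, Matrix.mulVec, dotProduct, mul_comm]

/-- for `Ψ, Ψ'` with orthonormal columns and nonnegative weights
`a, b` each summing to one, with `D = diag(aᵢ^{1/4})`, `D' = diag(bⱼ^{1/4})`,
one has `‖(ΨD)ᵀ(Ψ'D')‖_F² ≤ 1`; consequently the weighted subspace distance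
`sqrt(1 − ‖(ΨD)ᵀ(Ψ'D')‖_F²)` is well defined and lies in `[0,1]`. -/
theorem stmt_19 {n r r' : ℕ} (hn : 1 ≤ n) (hr : 1 ≤ r) (hr' : 1 ≤ r')
    (hrn : r ≤ n) (hr'n : r' ≤ n)
    (Ψ : Matrix (Fin n) (Fin r) ℝ) (Ψ' : Matrix (Fin n) (Fin r') ℝ)
    (hΨ : Ψᵀ * Ψ = 1) (hΨ' : Ψ'ᵀ * Ψ' = 1)
    (a : Fin r → ℝ) (b : Fin r' → ℝ)
    (ha : ∀ i, 0 ≤ a i) (hb : ∀ j, 0 ≤ b j)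
    (hsa : ∑ i, a i = 1) (hsb : ∑ j, b j = 1)
    (D : Matrix (Fin r) (Fin r) ℝ) (hD : D = Matrix.diagonal fun i => (a i) ^ ((1 : ℝ) / 4))
    (D' : Matrix (Fin r') (Fin r') ℝ) (hD' : D' = Matrix.diagonal fun j => (b j) ^ ((1 : ℝ) / 4)) :
    frobSq ((Ψ * D)ᵀ * (Ψ' * D')) ≤ 1 ∧
      0 ≤ Real.sqrt (1 - frobSq ((Ψ * D)ᵀ * (Ψ' * D'))) ∧
      Real.sqrt (1 - frobSq ((Ψ * D)ᵀ * (Ψ' * D'))) ≤ 1 := by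
  set C : Matrix (Fin r) (Fin r') ℝ := Ψᵀ * Ψ' with hC
  -- entrywise formula
  have hentry : ∀ i j, ((Ψ * D)ᵀ * (Ψ' * D')) i j
      = (a i) ^ ((1:ℝ)/4) * C i j * (b j) ^ ((1:ℝ)/4) := by
    intro i j
    have : (Ψ * D)ᵀ * (Ψ' * D') = Dᵀ * (C * D') := by
      rw [Matrix.transpose_mul, hC, Matrix.mul_assoc, Matrix.mul_assoc]
    rw [this, hD, hD', Matrix.diagonal_transpose, Matrix.diagonal_mul, Matrix.mul_diagonal]
    ring
  have hq : ∀ (x : ℝ), 0 ≤ x → (x ^ ((1:ℝ)/4)) ^ 2 = Real.sqrt x := by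
    intro x hx
    rw [← Real.rpow_natCast (x ^ ((1:ℝ)/4)) 2, ← Real.rpow_mul hx]
    norm_num [Real.sqrt_eq_rpow]
  -- frobSq = ∑∑ √aᵢ √bⱼ Cᵢⱼ²
  have hfrob : frobSq ((Ψ * D)ᵀ * (Ψ' * D'))
      = ∑ i, ∑ j, Real.sqrt (a i) * Real.sqrt (b j) * (C i j) ^ 2 := by
    unfold frobSq
    refine Finset.sum_congr rfl fun i _ => Finset.sum_congr rfl fun j _ => ?_
    rw [hentry i j, mul_pow, mul_pow, hq _ (ha i), hq _ (hb j)]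
    ring
  have hrowC : ∀ i, ∑ j, (C i j) ^ 2 ≤ 1 := row_bound Ψ Ψ' hΨ hΨ'
  have hcolC : ∀ j, ∑ i, (C i j) ^ 2 ≤ 1 := by
    intro j
    have := row_bound Ψ' Ψ hΨ' hΨ j
    refine le_trans (le_of_eq ?_) this
    refine Finset.sum_congr rfl fun i _ => ?_
    congr 1
    simp [hC, Matrix.mul_apply, mul_comm]
  have key : frobSq ((Ψ * D)ᵀ * (Ψ' * D')) ≤ 1 := by
    rw [hfrob]
    have step1 : ∑ i, ∑ j, Real.sqrt (a i) * Real.sqrt (b j) * (C i j) ^ 2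
        ≤ ∑ i, ∑ j, ((a i + b j) / 2) * (C i j) ^ 2 := by
      refine Finset.sum_le_sum fun i _ => Finset.sum_le_sum fun j _ => ?_
      have amgm : Real.sqrt (a i) * Real.sqrt (b j) ≤ (a i + b j) / 2 := by
        nlinarith [sq_nonneg (Real.sqrt (a i) - Real.sqrt (b j)),
          Real.sq_sqrt (ha i), Real.sq_sqrt (hb j)]
      exact mul_le_mul_of_nonneg_right amgm (sq_nonneg _)
    refine le_trans step1 ?_
    have split : ∑ i, ∑ j, ((a i + b j) / 2) * (C i j) ^ 2
        = (∑ i, (a i / 2) * ∑ j, (C i j) ^ 2)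
          + (∑ j, (b j / 2) * ∑ i, (C i j) ^ 2) := by
      calc ∑ i, ∑ j, ((a i + b j) / 2) * (C i j) ^ 2
          = ∑ i, ∑ j, ((a i / 2) * (C i j) ^ 2 + (b j / 2) * (C i j) ^ 2) := by
            refine Finset.sum_congr rfl fun i _ => Finset.sum_congr rfl fun j _ => ?_
            ring
        _ = (∑ i, ∑ j, (a i / 2) * (C i j) ^ 2)
              + ∑ i, ∑ j, (b j / 2) * (C i j) ^ 2 := by
            rw [← Finset.sum_add_distrib]
            exact Finset.sum_congr rfl fun i _ => Finset.sum_add_distrib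
        _ = (∑ i, (a i / 2) * ∑ j, (C i j) ^ 2)
              + ∑ j, (b j / 2) * ∑ i, (C i j) ^ 2 := by
            rw [Finset.sum_comm (f := fun i j => (b j / 2) * (C i j) ^ 2)]
            simp [Finset.mul_sum]
    rw [split]
    have b1 : ∑ i, (a i / 2) * ∑ j, (C i j) ^ 2 ≤ ∑ i, a i / 2 :=
      Finset.sum_le_sum fun i _ =>
        mul_le_of_le_one_right (div_nonneg (ha i) (by norm_num)) (hrowC i)
    have b2 : ∑ j, (b j / 2) * ∑ i, (C i j) ^ 2 ≤ ∑ j, b j / 2 :=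
      Finset.sum_le_sum fun j _ =>
        mul_le_of_le_one_right (div_nonneg (hb j) (by norm_num)) (hcolC j)
    have e1 : ∑ i, a i / 2 = 1 / 2 := by rw [← Finset.sum_div, hsa]
    have e2 : ∑ j, b j / 2 = 1 / 2 := by rw [← Finset.sum_div, hsb]
    linarith
  refine ⟨key, Real.sqrt_nonneg _, ?_⟩
  have h0 : 0 ≤ frobSq ((Ψ * D)ᵀ * (Ψ' * D')) := by
    unfold frobSq; positivity
  calc Real.sqrt (1 - frobSq ((Ψ * D)ᵀ * (Ψ' * D')))
      ≤ Real.sqrt 1 := Real.sqrt_le_sqrt (by linarith)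
    _ = 1 := Real.sqrt_one
end
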